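/- arXiv:2506.22128 — 3 statements merged into one kernel-verified Lean document; each statement's English description precedes it below -/
import Mathlib

section
/- For any real p ≥ 2 and any a, b > 0, one has ((a-1)_+^p + (b-1)_+^p)/(a² + b²) ≥ (a-1)_+^p/(4a²) + (b-1)_+^p/(4b²), where (s)_+ = max(s,0). -/
lemma aux_mono (p a b : ℝ) (hp : 2 ≤ p) (ha : 0 < a) (hab : a ≤ b) :
    max (a - 1) 0 ^ p / a ^ 2 ≤ max (b - 1) 0 ^ p / b ^ 2 := by
  have hb : 0 < b := lt_of_lt_of_le ha hab
  rcases le_or_gt a 1 with h1 | h1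
  · have hma : max (a - 1) 0 = 0 := max_eq_right (by linarith)
    rw [hma, Real.zero_rpow (by linarith), zero_div]
    positivity
  · have hb1 : 1 < b := lt_of_lt_of_le h1 hab
    rw [max_eq_left (by linarith), max_eq_left (by linarith),
      div_le_div_iff₀ (by positivity) (by positivity)]
    have h1' : (0:ℝ) ≤ (a - 1) * b := by nlinarith
    have hkey1 : ((a - 1) * b) ^ p ≤ ((b - 1) * a) ^ p :=
      Real.rpow_le_rpow h1' (by nlinarith) (by linarith)
    have hkey2 : b ^ (2 - p) ≤ a ^ (2 - p) :=
      Real.rpow_le_rpow_of_nonpos ha hab (by linarith)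
    have hmul : ((a - 1) * b) ^ p * b ^ (2 - p) ≤ ((b - 1) * a) ^ p * a ^ (2 - p) :=
      mul_le_mul hkey1 hkey2 (by positivity) (Real.rpow_nonneg (by nlinarith) p)
    have e1 : ((a - 1) * b) ^ p * b ^ (2 - p) = (a - 1) ^ p * b ^ 2 := by
      rw [Real.mul_rpow (by linarith) (le_of_lt hb), mul_assoc,
        ← Real.rpow_add hb, ← Real.rpow_two]
      norm_num
    have e2 : ((b - 1) * a) ^ p * a ^ (2 - p) = (b - 1) ^ p * a ^ 2 := by
      rw [Real.mul_rpow (by linarith) (le_of_lt ha), mul_assoc,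
        ← Real.rpow_add ha, ← Real.rpow_two]
      norm_num
    rw [e1, e2] at hmul
    exact hmul

theorem stmt_0 (p a b : ℝ) (hp : 2 ≤ p) (ha : 0 < a) (hb : 0 < b) :
    (max (a - 1) 0 ^ p + max (b - 1) 0 ^ p) / (a ^ 2 + b ^ 2) ≥
      max (a - 1) 0 ^ p / (4 * a ^ 2) + max (b - 1) 0 ^ p / (4 * b ^ 2) := by
  wlog hab : a ≤ b with H
  · have h := H p b a hp hb ha (le_of_not_ge hab)
    rw [add_comm (b ^ 2), add_comm (max (b - 1) 0 ^ p)] at h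
    linarith
  · set X := max (a - 1) 0 ^ p with hXdef
    set Y := max (b - 1) 0 ^ p with hYdef
    have hX : 0 ≤ X := Real.rpow_nonneg (le_max_right _ _) p
    have hY : 0 ≤ Y := Real.rpow_nonneg (le_max_right _ _) p
    have key := aux_mono p a b hp ha hab
    have hk : X * b ^ 2 ≤ Y * a ^ 2 := by
      rwa [div_le_div_iff₀ (by positivity) (by positivity)] at key
    rw [ge_iff_le, div_add_div _ _ (by positivity) (by positivity),
      div_le_div_iff₀ (by positivity) (by positivity)]
    nlinarith [mul_nonneg (sub_nonneg.mpr hk) (by nlinarith : (0:ℝ) ≤ b ^ 2 - a ^ 2),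
      mul_nonneg hX (by positivity : (0:ℝ) ≤ a ^ 2 * b ^ 2),
      mul_nonneg hY (by positivity : (0:ℝ) ≤ a ^ 2 * b ^ 2)]
end

section
/- Let 2 ≤ p < ∞. If for all ξ, η ∈ ℝⁿ \ {0} one has ⟨H_{p-1}(ξ) - H_{p-1}(η), ξ - η⟩ ≥ c(p) · (|η|-1)_+^p / (|η|·(|ξ|+|η|)) · |ξ-η|² (with the same inequality holding with ξ and η interchanged), then ⟨H_{p-1}(ξ) - H_{p-1}(η), ξ - η⟩ ≥ (c(p)/4) · [ (|ξ|-1)_+^p/|ξ|² + (|η|-1)_+^p/|η|² ] · |ξ-η|². -/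
noncomputable def Hfun {n : ℕ} (γ : ℝ) (ξ : EuclideanSpace ℝ (Fin n)) :
    EuclideanSpace ℝ (Fin n) :=
  open Classical in
  if ξ = 0 then 0 else (max (‖ξ‖ - 1) 0) ^ γ • (‖ξ‖⁻¹ • ξ)

lemma g_mono_aux (p : ℝ) (hp : 2 ≤ p) {t T : ℝ} (ht : 0 < t) (htT : t ≤ T) :
    max (t - 1) 0 ^ p / t ^ 2 ≤ max (T - 1) 0 ^ p / T ^ 2 := by
  have hT : 0 < T := lt_of_lt_of_le ht htT
  set a := max (t - 1) 0 with ha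
  set b := max (T - 1) 0 with hb
  have ha0 : 0 ≤ a := le_max_right _ _
  have hb0 : 0 ≤ b := le_max_right _ _
  have hab : a ≤ b := max_le_max (by linarith) le_rfl
  have hp2 : (0:ℝ) ≤ p - 2 := by linarith
  have ekey : ∀ x : ℝ, 0 ≤ x → x ^ p = x ^ (2:ℝ) * x ^ (p - 2) := by
    intro x hx
    rw [← Real.rpow_add_of_nonneg hx (by norm_num) hp2]
    norm_num
  have haT : a * T ≤ b * t := by
    rcases le_or_gt t 1 with h1 | h1
    · have : a = 0 := by simp [ha]; linarith
      rw [this]; simpa using mul_nonneg hb0 ht.le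
    · have hat : a = t - 1 := by simp [ha]; linarith
      have hbt : b = T - 1 := by simp [hb]; linarith
      rw [hat, hbt]; nlinarith
  have h1 : a / t ≤ b / T := by
    rw [div_le_div_iff₀ ht hT]; exact haT
  have h2 : (a / t) ^ (2:ℝ) ≤ (b / T) ^ (2:ℝ) :=
    Real.rpow_le_rpow (div_nonneg ha0 ht.le) h1 (by norm_num)
  have h3 : a ^ (p - 2) ≤ b ^ (p - 2) := Real.rpow_le_rpow ha0 hab hp2
  have e1 : a ^ p / t ^ 2 = (a / t) ^ (2:ℝ) * a ^ (p - 2) := by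
    rw [ekey a ha0, Real.div_rpow ha0 ht.le]
    rw [show ((2:ℝ)) = ((2:ℕ):ℝ) by norm_num, Real.rpow_natCast, Real.rpow_natCast]
    field_simp
  have e2 : b ^ p / T ^ 2 = (b / T) ^ (2:ℝ) * b ^ (p - 2) := by
    rw [ekey b hb0, Real.div_rpow hb0 hT.le]
    rw [show ((2:ℝ)) = ((2:ℕ):ℝ) by norm_num, Real.rpow_natCast, Real.rpow_natCast]
    field_simp
  rw [e1, e2]
  exact mul_le_mul h2 h3 (Real.rpow_nonneg ha0 _)
    (Real.rpow_nonneg (div_nonneg hb0 hT.le) _)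

theorem stmt_5 {n : ℕ} (p c : ℝ) (hp : 2 ≤ p) (hc : 0 < c)
    (h : ∀ ξ η : EuclideanSpace ℝ (Fin n), ξ ≠ 0 → η ≠ 0 →
      (inner ℝ (Hfun (p - 1) ξ - Hfun (p - 1) η) (ξ - η) : ℝ) ≥
        c * (max (‖η‖ - 1) 0 ^ p / (‖η‖ * (‖ξ‖ + ‖η‖))) * ‖ξ - η‖ ^ 2) :
    ∀ ξ η : EuclideanSpace ℝ (Fin n), ξ ≠ 0 → η ≠ 0 →
      (inner ℝ (Hfun (p - 1) ξ - Hfun (p - 1) η) (ξ - η) : ℝ) ≥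
        (c / 4) * (max (‖ξ‖ - 1) 0 ^ p / ‖ξ‖ ^ 2 + max (‖η‖ - 1) 0 ^ p / ‖η‖ ^ 2) *
          ‖ξ - η‖ ^ 2 := by
  intro ξ η hξ hη
  have h1 := h ξ η hξ hη
  have h2 := h η ξ hη hξ
  have hsym : (inner ℝ (Hfun (p-1) η - Hfun (p-1) ξ) (η - ξ) : ℝ)
      = inner ℝ (Hfun (p-1) ξ - Hfun (p-1) η) (ξ - η) := by
    rw [← inner_neg_neg (𝕜 := ℝ)]
    simp [neg_sub]
  rw [hsym, norm_sub_rev η ξ] at h2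
  set T := ‖ξ‖ with hTdef
  set t := ‖η‖ with htdef
  have hT : 0 < T := norm_pos_iff.mpr hξ
  have ht : 0 < t := norm_pos_iff.mpr hη
  set A := max (T - 1) 0 ^ p with hAdef
  set B := max (t - 1) 0 ^ p with hBdef
  set X := ‖ξ - η‖ ^ 2 with hXdef
  set I : ℝ := inner ℝ (Hfun (p-1) ξ - Hfun (p-1) η) (ξ - η) with hIdef
  have hX : 0 ≤ X := sq_nonneg _
  have hA : 0 ≤ A := Real.rpow_nonneg (le_max_right _ _) _
  have hB : 0 ≤ B := Real.rpow_nonneg (le_max_right _ _) _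
  have hs : 0 < T + t := by linarith
  set u := A / T ^ 2 with hudef
  set v := B / t ^ 2 with hvdef
  have hu : 0 ≤ u := div_nonneg hA (sq_nonneg _)
  have hv : 0 ≤ v := div_nonneg hB (sq_nonneg _)
  -- sign fact from monotonicity
  have hsign : 0 ≤ (u - v) * (T - t) := by
    rcases le_total t T with hle | hle
    · have := g_mono_aux p hp ht hle
      have : v ≤ u := this
      nlinarith
    · have := g_mono_aux p hp hT hle
      have : u ≤ v := this
      nlinarith
  -- rewrite the hypotheses
  have e1 : B / (t * (T + t)) = v * t / (T + t) := by
    rw [hvdef]; field_simp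
  have e2 : A / (T * (t + T)) = u * T / (T + t) := by
    rw [hudef]; field_simp; ring
  rw [e1] at h1
  rw [e2] at h2
  -- key averaging inequality
  have key : (u + v) / 2 ≤ u * T / (T + t) + v * t / (T + t) := by
    rw [← add_div, div_le_div_iff₀ (by norm_num) hs]
    nlinarith
  have h1' : c * (v * t / (T + t)) * X ≤ I := h1
  have h2' : c * (u * T / (T + t)) * X ≤ I := h2
  have : c * ((u + v) / 2) * X ≤ 2 * I := by
    calc c * ((u + v) / 2) * X ≤ c * (u * T / (T + t) + v * t / (T + t)) * X := by
          apply mul_le_mul_of_nonneg_right _ hX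
          exact mul_le_mul_of_nonneg_left key hc.le
      _ = c * (u * T / (T + t)) * X + c * (v * t / (T + t)) * X := by ring
      _ ≤ 2 * I := by linarith
  show (c / 4) * (u + v) * X ≤ I
  linarith
end

section
/- Let β ∈ [0,1] and ε > 0. For every s with |s| > 1+ε, the quantity T_ε(s) = G_ε'(s) - β · (G_ε(s)/s) · (|s| / (|s|-1)) is nonnegative, where G_ε' exists (G_ε' = 2 on (1+ε, 1+2ε) and G_ε' = 1 on (1+2ε, ∞), symmetrically for negative s). -/
noncomputable def Gpos (ε s : ℝ) : ℝ :=
  open Classical in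
  if s ≤ 1 + ε then 0 else if s < 1 + 2 * ε then 2 * s - 2 * (1 + ε) else s - 1

noncomputable def Gfun (ε s : ℝ) : ℝ :=
  open Classical in
  if 0 ≤ s then Gpos ε s else -Gpos ε (-s)

lemma Godd (ε : ℝ) (hε : 0 < ε) (s : ℝ) : Gfun ε (-s) = -Gfun ε s := by
  unfold Gfun
  rcases lt_trichotomy s 0 with h | h | h
  · rw [if_pos (by linarith), if_neg (by linarith), neg_neg]
  · subst h
    have h0 : Gpos ε 0 = 0 := by unfold Gpos; rw [if_pos (by linarith)]
    simp [h0]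
  · rw [if_neg (by linarith), if_pos (by linarith), neg_neg]

lemma main_pos (β ε : ℝ) (hβ0 : 0 ≤ β) (hβ1 : β ≤ 1) (hε : 0 < ε)
    (s d : ℝ) (hs : 1 + ε < s) (hd : HasDerivAt (Gfun ε) d s) :
    0 ≤ d - β * (Gfun ε s / s) * (s / (s - 1)) := by
  have hs1 : (1:ℝ) < s := by linarith
  have hs0 : (0:ℝ) < s := by linarith
  have hsm1 : (0:ℝ) < s - 1 := by linarith
  have hGx : ∀ x : ℝ, 1 + ε < x → Gfun ε x =
      (if x < 1 + 2 * ε then 2 * x - 2 * (1 + ε) else x - 1) := by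
    intro x hx
    have hx0 : (0:ℝ) ≤ x := by linarith
    simp only [Gfun, Gpos, if_pos hx0, if_neg (not_le.mpr hx)]
  have key : ∀ x : ℝ, 1 + ε < x → Gfun ε x / x * (x / (x - 1)) = Gfun ε x / (x - 1) := by
    intro x hx
    have hx0 : x ≠ 0 := ne_of_gt (by linarith)
    rw [div_mul_div_comm, mul_comm (Gfun ε x) x, mul_div_mul_left _ _ hx0]
  rcases lt_trichotomy s (1 + 2 * ε) with hc | hc | hc
  · -- middle piece, d = 2
    have heq : Gfun ε =ᶠ[nhds s] (fun x => 2 * x - 2 * (1 + ε)) := by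
      filter_upwards [Ioo_mem_nhds hs hc] with x hx
      rw [hGx x hx.1, if_pos hx.2]
    have hd2 : HasDerivAt (fun x : ℝ => 2 * x - 2 * (1 + ε)) d s :=
      hd.congr_of_eventuallyEq heq.symm
    have hd2' : HasDerivAt (fun x : ℝ => 2 * x - 2 * (1 + ε)) 2 s := by
      simpa using ((hasDerivAt_id s).const_mul 2).sub_const (2 * (1 + ε))
    have hdval : d = 2 := hd2.unique hd2'
    have hG : Gfun ε s = 2 * s - 2 * (1 + ε) := by rw [hGx s hs, if_pos hc]
    rw [hdval, mul_assoc, key s hs, hG]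
    have h1 : (2 * s - 2 * (1 + ε)) / (s - 1) ≤ 2 := by
      rw [div_le_iff₀ hsm1]; linarith
    have h2 : 0 ≤ (2 * s - 2 * (1 + ε)) / (s - 1) := by
      apply div_nonneg _ (le_of_lt hsm1); linarith
    nlinarith [mul_le_mul hβ1 h1 h2 (zero_le_one)]
  · -- kink point : contradiction
    exfalso
    have h1 : HasDerivWithinAt (Gfun ε) d (Set.Ici s) s := hd.hasDerivWithinAt
    have h2 : HasDerivWithinAt (Gfun ε) d (Set.Iic s) s := hd.hasDerivWithinAt
    have e1 : HasDerivWithinAt (fun x : ℝ => x - 1) d (Set.Ici s) s := by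
      apply h1.congr_of_eventuallyEq_of_mem _ Set.self_mem_Ici
      filter_upwards [self_mem_nhdsWithin] with y hy
      have hy' : 1 + ε < y := by
        have := Set.mem_Ici.mp hy; linarith
      rw [hGx y hy', if_neg]
      have := Set.mem_Ici.mp hy; linarith
    have e2 : HasDerivWithinAt (fun x : ℝ => 2 * x - 2 * (1 + ε)) d (Set.Iic s) s := by
      apply h2.congr_of_eventuallyEq_of_mem _ Set.self_mem_Iic
      filter_upwards [nhdsWithin_le_nhds (Ioi_mem_nhds hs), self_mem_nhdsWithin]
        with y hy1 hy2
      have hys : y ≤ s := Set.mem_Iic.mp hy2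
      rw [hGx y hy1]
      split_ifs with h
      · rfl
      · have : y = 1 + 2 * ε := le_antisymm (hc ▸ hys) (not_lt.mp h)
        rw [this]; ring
    have f1 : HasDerivWithinAt (fun x : ℝ => x - 1) 1 (Set.Ici s) s :=
      ((hasDerivAt_id s).sub_const 1).hasDerivWithinAt
    have f2 : HasDerivWithinAt (fun x : ℝ => 2 * x - 2 * (1 + ε)) 2 (Set.Iic s) s := by
      have : HasDerivAt (fun x : ℝ => 2 * x - 2 * (1 + ε)) 2 s := by
        simpa using ((hasDerivAt_id s).const_mul 2).sub_const (2 * (1 + ε))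
      exact this.hasDerivWithinAt
    have u1 : d = 1 := by
      have a1 := e1.derivWithin ((uniqueDiffOn_Ici s) s Set.self_mem_Ici)
      have a2 := f1.derivWithin ((uniqueDiffOn_Ici s) s Set.self_mem_Ici)
      exact a1.symm.trans a2
    have u2 : d = 2 := by
      have a1 := e2.derivWithin ((uniqueDiffOn_Iic s) s Set.self_mem_Iic)
      have a2 := f2.derivWithin ((uniqueDiffOn_Iic s) s Set.self_mem_Iic)
      exact a1.symm.trans a2
    linarith [u1 ▸ u2]
  · -- outer piece, d = 1
    have heq : Gfun ε =ᶠ[nhds s] (fun x => x - 1) := by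
      filter_upwards [Ioi_mem_nhds hc] with x hx
      have hx' : 1 + ε < x := by
        have := Set.mem_Ioi.mp hx; linarith
      rw [hGx x hx', if_neg (not_lt.mpr (le_of_lt (Set.mem_Ioi.mp hx)))]
    have hd1 : HasDerivAt (fun x : ℝ => x - 1) d s :=
      hd.congr_of_eventuallyEq heq.symm
    have hd1' : HasDerivAt (fun x : ℝ => x - 1) 1 s := (hasDerivAt_id s).sub_const 1
    have hdval : d = 1 := hd1.unique hd1'
    have hG : Gfun ε s = s - 1 := by
      rw [hGx s hs, if_neg (not_lt.mpr (le_of_lt hc))]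
    rw [hdval, mul_assoc, key s hs, hG, div_self (ne_of_gt hsm1)]
    nlinarith

theorem stmt_9 (β ε : ℝ) (hβ0 : 0 ≤ β) (hβ1 : β ≤ 1) (hε : 0 < ε)
    (s d : ℝ) (hs : 1 + ε < |s|) (hd : HasDerivAt (Gfun ε) d s) :
    0 ≤ d - β * (Gfun ε s / s) * (|s| / (|s| - 1)) := by
  rcases le_or_gt 0 s with h | h
  · rw [abs_of_nonneg h] at hs ⊢
    exact main_pos β ε hβ0 hβ1 hε s d hs hd
  · rw [abs_of_neg h] at hs ⊢
    set t := -s with ht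
    have hst : s = -t := by simp [ht]
    have hdt : HasDerivAt (Gfun ε) d t := by
      have hneg : HasDerivAt (fun x : ℝ => -x) (-1) t := by
        exact hasDerivAt_neg t
      have hcomp : HasDerivAt (fun x : ℝ => Gfun ε (-x)) (d * (-1)) t := by
        exact HasDerivAt.comp t (hst ▸ hd) hneg
      have heq : (fun x : ℝ => Gfun ε (-x)) = fun x : ℝ => -Gfun ε x := by
        funext x; exact Godd ε hε x
      rw [heq] at hcomp
      have h3 : HasDerivAt (fun x : ℝ => - -Gfun ε x) (-(d * -1)) t := hcomp.neg
      simp only [neg_neg, mul_neg, mul_one] at h3; exact h3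
    have h1 := main_pos β ε hβ0 hβ1 hε t d hs hdt
    have hGs : Gfun ε s / s = Gfun ε t / t := by
      rw [hst, Godd ε hε t, neg_div_neg_eq]
    rw [hGs]
    exact h1
end
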